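/- arXiv:1712.07414 — 4 statements merged into one kernel-verified Lean document; each statement's English description precedes it below -/
import Mathlib

section
/- Let Q be a closed form in the wide sense on L²(X,m) with resolvent G₁, let A ⊆ X be measurable, and let P_A be the orthogonal projection from the Hilbert space (D(Q), ⟨·,·⟩_Q) onto the closed subspace D(Q_A) = {u ∈ D(Q) : u·1_{X∖A} = 0}. Then the resolvent G₁^A of the restricted form Q_A satisfies G₁^A f = P_A G₁ f for all f ∈ L²(X,m), where G₁^A f := G₁^A(1_A f). -/
open MeasureTheory Filter Topology RealInnerProductSpace

noncomputable section

variable {X : Type*} [MeasurableSpace X]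

open scoped Classical in
/-- Multiplication by the indicator function of a set `A`, as a map on `L²`. -/
def indMul {μ : Measure X} (A : Set X) (f : Lp ℝ 2 μ) : Lp ℝ 2 μ :=
  if h : MeasurableSet A then ((Lp.memLp f).indicator h).toLp else 0

/-- A closed (nonnegative, symmetric) quadratic form in the wide sense on `L²(X,m)`:
its domain is a not necessarily dense subspace which is complete in the form norm. -/
structure WideForm (μ : Measure X) where
  dom : Submodule ℝ (Lp ℝ 2 μ)
  Q : Lp ℝ 2 μ → Lp ℝ 2 μ → ℝ
  symm : ∀ u v, Q u v = Q v u
  add_left : ∀ u v w, Q (u + v) w = Q u w + Q v w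
  smul_left : ∀ (c : ℝ) u v, Q (c • u) v = c * Q u v
  nonneg : ∀ u, 0 ≤ Q u u
  closed : ∀ f : ℕ → Lp ℝ 2 μ, (∀ n, f n ∈ dom) →
    (∀ ε > 0, ∃ N, ∀ m ≥ N, ∀ n ≥ N,
      Q (f m - f n) (f m - f n) + ‖f m - f n‖ ^ 2 < ε) →
    ∃ g ∈ dom, Tendsto (fun n => Q (f n - g) (f n - g) + ‖f n - g‖ ^ 2) atTop (nhds 0)

/-- `G` is the resolvent family of the closed form `T`. -/
def WideForm.IsResolvent {μ : Measure X} (T : WideForm μ)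
    (G : ℝ → Lp ℝ 2 μ →L[ℝ] Lp ℝ 2 μ) : Prop :=
  ∀ α > 0, ∀ u, G α u ∈ T.dom ∧
    ∀ v ∈ T.dom, T.Q (G α u) v + α * ⟪G α u, v⟫ = ⟪u, v⟫

/-- `T` is positivity preserving. -/
def WideForm.PosPres {μ : Measure X} (T : WideForm μ) : Prop :=
  ∀ u ∈ T.dom, |u| ∈ T.dom ∧ T.Q |u| |u| ≤ T.Q u u

/-!
Both `G₁^A f` and `P_A G₁ f` lie in `D(Q_A)` and represent the functional `v ↦ ⟨f, v⟩` for the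
inner product `⟨·,·⟩_Q` on `D(Q_A)`: for `G₁^A f` this is its defining equation, for `P_A G₁ f`
it follows from the equation of `G₁ f` since `G₁ f - P_A G₁ f` is `⟨·,·⟩_Q`-orthogonal to
`D(Q_A) ⊆ D(Q)`. Their difference `w` then has `Q(w, w) + ‖w‖² = 0`, so `w = 0`.
-/

namespace WideForm

variable {μ : Measure X} (T : WideForm μ)

theorem sub_left (u v w : Lp ℝ 2 μ) : T.Q (u - v) w = T.Q u w - T.Q v w := by
  have h := T.add_left (u - v) v w
  rw [sub_add_cancel] at h
  linarith

theorem eq_zero_of_form_add_inner_self_eq_zero {w : Lp ℝ 2 μ}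
    (hw : T.Q w w + ⟪w, w⟫ = 0) : w = 0 := by
  have hform := T.nonneg w
  have hinner : (0 : ℝ) ≤ ⟪w, w⟫ := real_inner_self_nonneg
  exact inner_self_eq_zero.mp (le_antisymm (by linarith) hinner)

theorem eq_of_forall_form_add_inner_eq {u u' : Lp ℝ 2 μ} (hu : u ∈ T.dom) (hu' : u' ∈ T.dom)
    (h : ∀ v ∈ T.dom, T.Q u v + ⟪u, v⟫ = T.Q u' v + ⟪u', v⟫) : u = u' := by
  refine sub_eq_zero.mp (T.eq_zero_of_form_add_inner_self_eq_zero ?_)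
  have := h (u - u') (T.dom.sub_mem hu hu')
  rw [sub_left, inner_sub_left]
  linarith

theorem IsResolvent.form_add_inner_one {T : WideForm μ} {G : ℝ → Lp ℝ 2 μ →L[ℝ] Lp ℝ 2 μ}
    (hG : T.IsResolvent G) (u : Lp ℝ 2 μ) {v : Lp ℝ 2 μ} (hv : v ∈ T.dom) :
    T.Q (G 1 u) v + ⟪G 1 u, v⟫ = ⟪u, v⟫ := by
  simpa only [one_mul] using (hG 1 one_pos u).2 v hv

end WideForm

theorem resolvent_of_restriction_eq_projection_general {μ : Measure X} (T : WideForm μ)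
    (G : ℝ → Lp ℝ 2 μ →L[ℝ] Lp ℝ 2 μ) (hG : T.IsResolvent G)
    (A : Set X)
    (T' : WideForm μ)
    (hdom : (T'.dom : Set (Lp ℝ 2 μ)) = {u | u ∈ T.dom ∧ indMul Aᶜ u = 0})
    (hQ : ∀ u v, T'.Q u v = T.Q u v)
    (G' : ℝ → Lp ℝ 2 μ →L[ℝ] Lp ℝ 2 μ) (hG' : T'.IsResolvent G')
    (P : Lp ℝ 2 μ → Lp ℝ 2 μ)
    (hP : ∀ g ∈ T.dom, P g ∈ T'.dom ∧
      ∀ v ∈ T'.dom, T.Q (g - P g) v + ⟪g - P g, v⟫ = (0 : ℝ)) :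
    ∀ f : Lp ℝ 2 μ, G' 1 f = P (G 1 f) := by
  intro f
  have hdom_le : ∀ v ∈ T'.dom, v ∈ T.dom := fun v hv =>
    ((Set.ext_iff.mp hdom v).mp hv).1
  obtain ⟨hPmem, hPorth⟩ := hP (G 1 f) (hG 1 one_pos f).1
  refine T'.eq_of_forall_form_add_inner_eq (hG' 1 one_pos f).1 hPmem fun v hv => ?_
  have hG'v := hG'.form_add_inner_one f hv
  have hGv := hG.form_add_inner_one f (hdom_le v hv)
  have hPv := hPorth v hv
  rw [T.sub_left, inner_sub_left] at hPv
  simp only [hQ] at hG'v ⊢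
  linarith

/-- the resolvent of the restricted form is the `‖·‖_Q`-orthogonal projection
of the resolvent: `G₁^A f = P_A G₁ f`. -/
theorem resolvent_of_restriction_eq_projection {μ : Measure X} (T : WideForm μ)
    (G : ℝ → Lp ℝ 2 μ →L[ℝ] Lp ℝ 2 μ) (hG : T.IsResolvent G)
    (A : Set X) (hA : MeasurableSet A)
    (T' : WideForm μ)
    (hdom : (T'.dom : Set (Lp ℝ 2 μ)) = {u | u ∈ T.dom ∧ indMul Aᶜ u = 0})
    (hQ : ∀ u v, T'.Q u v = T.Q u v)
    (G' : ℝ → Lp ℝ 2 μ →L[ℝ] Lp ℝ 2 μ) (hG' : T'.IsResolvent G')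
    (P : Lp ℝ 2 μ → Lp ℝ 2 μ)
    (hP : ∀ g ∈ T.dom, P g ∈ T'.dom ∧
      ∀ v ∈ T'.dom, T.Q (g - P g) v + ⟪g - P g, v⟫ = (0 : ℝ)) :
    ∀ f : Lp ℝ 2 μ, G' 1 f = P (G 1 f) :=
  resolvent_of_restriction_eq_projection_general T G hG A T' hdom hQ G' hG' P hP
end
end

section
/- Let Q be a closed form in the wide sense on L²(X,m) with compact resolvent and A ⊆ X measurable. Then the restricted form Q_A, defined on D(Q_A) = {u ∈ D(Q) : u·1_{X∖A} = 0 a.e.}, also has compact resolvent. -/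
/-!
Since `D(Q_A) ⊆ D(Q)` and both resolvents solve the same variational problem, `G'_α u` is the
orthogonal projection of `G_α u` onto `D(Q_A)` for the energy form `Q_α = Q + α⟨·,·⟩`. Hence
`α ‖G'_α u‖² ≤ Q_α(G'_α u) ≤ Q_α(G_α u) = ⟨u, G_α u⟩ ≤ ‖u‖ ‖G_α u‖`.
An operator `S` with `‖S x‖² ≤ C ‖x‖ ‖K x‖` for a compact `K` is compact: on the unit ball `B`,
`‖S x - S y‖² ≤ 2C ‖K x - K y‖`, so a finite net of the totally bounded set `K(B)` yields one
of `S(B)`.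
-/
open MeasureTheory Filter Topology RealInnerProductSpace

noncomputable section

variable {X : Type*} [MeasurableSpace X]

theorem TotallyBounded.image_of_controlled {α β γ : Type*} [PseudoMetricSpace β]
    [PseudoMetricSpace γ] {f : α → γ} {g : α → β} {s : Set α} (hs : TotallyBounded (g '' s))
    (hfg : ∀ ε > 0, ∃ δ > 0, ∀ x ∈ s, ∀ y ∈ s, dist (g x) (g y) < δ → dist (f x) (f y) < ε) :
    TotallyBounded (f '' s) := by
  refine Metric.totallyBounded_iff.2 fun ε hε => ?_
  obtain ⟨δ, hδ, hcontrol⟩ := hfg ε hε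
  obtain ⟨t, hts, htfin, hcover⟩ := Metric.finite_approx_of_totallyBounded hs δ hδ
  obtain ⟨u, hus, hufin, rfl⟩ := Set.exists_subset_image_finite_and.1 ⟨t, hts, htfin, rfl⟩
  refine ⟨f '' u, hufin.image f, ?_⟩
  rintro _ ⟨x, hx, rfl⟩
  obtain ⟨_, ⟨y, hy, rfl⟩, hxy⟩ := Set.mem_iUnion₂.1 (hcover ⟨x, hx, rfl⟩)
  exact Set.mem_iUnion₂.2 ⟨f y, ⟨y, hy, rfl⟩, hcontrol x hx y (hus hy) hxy⟩

theorem IsCompactOperator.of_sq_norm_le_mul_norm {𝕜 E F₁ F₂ : Type*} [NontriviallyNormedField 𝕜]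
    [NormedAddCommGroup E] [NormedSpace 𝕜 E] [NormedAddCommGroup F₁] [NormedSpace 𝕜 F₁]
    [NormedAddCommGroup F₂] [NormedSpace 𝕜 F₂] [CompleteSpace F₂] {K : E →ₗ[𝕜] F₁}
    (hK : IsCompactOperator K) (S : E →ₗ[𝕜] F₂) (C : ℝ)
    (hS : ∀ x, ‖S x‖ ^ 2 ≤ C * (‖x‖ * ‖K x‖)) :
    IsCompactOperator S := by
  rw [isCompactOperator_iff_isCompact_closure_image_closedBall S one_pos]
  refine (TotallyBounded.closure ?_).isCompact_of_isClosed isClosed_closure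
  refine ((hK.isCompact_closure_image_closedBall 1).totallyBounded.subset subset_closure
    ).image_of_controlled fun ε hε => ⟨ε ^ 2 / (2 * (|C| + 1)), by positivity, ?_⟩
  intro x hx y hy hKxy
  rw [dist_eq_norm, ← map_sub] at hKxy ⊢
  have hxy : ‖x - y‖ ≤ 2 := by
    have := norm_sub_le x y
    rw [mem_closedBall_zero_iff] at hx hy
    linarith
  refine lt_of_pow_lt_pow_left₀ 2 hε.le ?_
  calc ‖S (x - y)‖ ^ 2 ≤ C * (‖x - y‖ * ‖K (x - y)‖) := hS (x - y)
    _ ≤ |C| * (2 * (ε ^ 2 / (2 * (|C| + 1)))) := by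
      gcongr
      · exact le_abs_self C
    _ = |C| / (|C| + 1) * ε ^ 2 := by field_simp
    _ < ε ^ 2 :=
      mul_lt_of_lt_one_left (by positivity) ((div_lt_one (by positivity)).2 (lt_add_one _))

namespace WideForm

variable {μ : Measure X}

theorem Q_sub_left (T : WideForm μ) (u v w : Lp ℝ 2 μ) : T.Q (u - v) w = T.Q u w - T.Q v w := by
  rw [sub_eq_add_neg, T.add_left, ← neg_one_smul ℝ v, T.smul_left]
  ring

theorem Q_sub_right (T : WideForm μ) (u v w : Lp ℝ 2 μ) : T.Q u (v - w) = T.Q u v - T.Q u w := by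
  rw [T.symm, Q_sub_left, T.symm v, T.symm w]

/-- Pythagoras for the energy form `Q_α = Q + α⟨·,·⟩`. -/
theorem energy_le_of_energy_sub_eq_zero (T : WideForm μ) {α : ℝ} (hα : 0 ≤ α)
    {d e : Lp ℝ 2 μ} (horth : T.Q (e - d) d + α * ⟪e - d, d⟫ = 0) :
    T.Q d d + α * ⟪d, d⟫ ≤ T.Q e e + α * ⟪e, e⟫ := by
  have hQ : T.Q e e = T.Q d d + 2 * T.Q (e - d) d + T.Q (e - d) (e - d) := by
    simp only [Q_sub_left, Q_sub_right, T.symm d e]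
    ring
  have hinner : ⟪e, e⟫ = ⟪d, d⟫ + 2 * ⟪e - d, d⟫ + ⟪e - d, e - d⟫ := by
    simp only [inner_sub_left, inner_sub_right, real_inner_comm d e]
    ring
  have hrest : 0 ≤ T.Q (e - d) (e - d) + α * ⟪e - d, e - d⟫ :=
    add_nonneg (T.nonneg _) (mul_nonneg hα real_inner_self_nonneg)
  rw [hQ, hinner]
  linarith

theorem IsResolvent.mul_norm_sq_le_of_le {T T' : WideForm μ}
    {G G' : ℝ → Lp ℝ 2 μ →L[ℝ] Lp ℝ 2 μ} (hG : T.IsResolvent G) (hG' : T'.IsResolvent G')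
    (hdom : T'.dom ≤ T.dom) (hQ : ∀ u v, T'.Q u v = T.Q u v) {α : ℝ} (hα : 0 < α) (u : Lp ℝ 2 μ) :
    α * ‖G' α u‖ ^ 2 ≤ ‖u‖ * ‖G α u‖ := by
  set d := G' α u
  set e := G α u
  obtain ⟨hd, hd_eq⟩ := hG' α hα u
  obtain ⟨he, he_eq⟩ := hG α hα u
  have horth : T.Q (e - d) d + α * ⟪e - d, d⟫ = 0 := by
    have h₁ := hd_eq d hd
    have h₂ := he_eq d (hdom hd)
    rw [hQ] at h₁
    rw [Q_sub_left, inner_sub_left]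
    linarith
  calc α * ‖d‖ ^ 2 ≤ T.Q d d + α * ⟪d, d⟫ := by
        rw [real_inner_self_eq_norm_sq]
        linarith [T.nonneg d]
    _ ≤ T.Q e e + α * ⟪e, e⟫ := T.energy_le_of_energy_sub_eq_zero hα.le horth
    _ = ⟪u, e⟫ := he_eq e he
    _ ≤ ‖u‖ * ‖e‖ := real_inner_le_norm u e

end WideForm

theorem restriction_compact_resolvent_general {μ : Measure X} (T : WideForm μ)
    (G : ℝ → Lp ℝ 2 μ →L[ℝ] Lp ℝ 2 μ) (hG : T.IsResolvent G)
    (hcpt : ∀ α > 0, IsCompactOperator (G α))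
    (A : Set X)
    (T' : WideForm μ)
    (hdom : (T'.dom : Set (Lp ℝ 2 μ)) = {u | u ∈ T.dom ∧ indMul Aᶜ u = 0})
    (hQ : ∀ u v, T'.Q u v = T.Q u v)
    (G' : ℝ → Lp ℝ 2 μ →L[ℝ] Lp ℝ 2 μ) (hG' : T'.IsResolvent G') :
    ∀ α > 0, IsCompactOperator (G' α) := by
  intro α hα
  have hle : T'.dom ≤ T.dom := fun v hv => ((Set.ext_iff.1 hdom v).1 hv).1
  refine IsCompactOperator.of_sq_norm_le_mul_norm (K := (G α).toLinearMap) (hcpt α hα)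
    (G' α).toLinearMap α⁻¹ fun u => ?_
  rw [le_inv_mul_iff₀ hα]
  exact hG.mul_norm_sq_le_of_le hG' hle hQ hα u

/-- the restriction of a closed form with compact resolvent has compact
resolvent. -/
theorem restriction_compact_resolvent {μ : Measure X} (T : WideForm μ)
    (G : ℝ → Lp ℝ 2 μ →L[ℝ] Lp ℝ 2 μ) (hG : T.IsResolvent G)
    (hcpt : ∀ α > 0, IsCompactOperator (G α))
    (A : Set X) (hA : MeasurableSet A)
    (T' : WideForm μ)
    (hdom : (T'.dom : Set (Lp ℝ 2 μ)) = {u | u ∈ T.dom ∧ indMul Aᶜ u = 0})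
    (hQ : ∀ u v, T'.Q u v = T.Q u v)
    (G' : ℝ → Lp ℝ 2 μ →L[ℝ] Lp ℝ 2 μ) (hG' : T'.IsResolvent G') :
    ∀ α > 0, IsCompactOperator (G' α) :=
  restriction_compact_resolvent_general T G hG hcpt A T' hdom hQ G' hG'
end
end

section
/- Let Q be a positivity preserving form in the wide sense on L²(X,m), A ⊆ X measurable, and P_A the orthogonal projection from (D(Q), ⟨·,·⟩_Q) onto D(Q_A) = {u ∈ D(Q) : u·1_{X∖A} = 0}. Then for every f ∈ D(Q) with f ≥ 0 a.e., we have P_A f ≤ f almost everywhere. -/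
open MeasureTheory Filter Topology RealInnerProductSpace

noncomputable section

variable {X : Type*} [MeasurableSpace X]

/-
Write `u = f - P_A f` and `⟨·,·⟩_Q = Q + ⟨·,·⟩_{L²}`. Since `f ≥ 0` and `P_A f` vanishes off `A`,
the function `v = u - |u| = -2 u⁻` vanishes off `A`, so `v ∈ D(Q_A)` and `⟨u, v⟩_Q = 0`.
Expanding, `⟨v, v⟩_Q = ⟨|u|, |u|⟩_Q - ⟨u, u⟩_Q ≤ 0` because `Q(|u|) ≤ Q(u)` and `‖|u|‖ = ‖u‖`.
Hence `v = 0`, i.e. `u = |u| ≥ 0`.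
-/

namespace LinearMap.BilinForm

variable {R M : Type*} [CommRing R] [PartialOrder R] [IsOrderedAddMonoid R] [AddCommGroup M]
  [Module R M]

theorem IsSymm.apply_sub_sub_nonpos {B : LinearMap.BilinForm R M} (hB : B.IsSymm) {u a : M}
    (horth : B u (u - a) = 0) (hle : B a a ≤ B u u) : B (u - a) (u - a) ≤ 0 := by
  have hexpand : B (u - a) (u - a) = B a a - B u u + 2 * B u (u - a) := by
    simp only [map_sub, LinearMap.sub_apply, hB.eq a u]
    ring
  rw [hexpand, horth, mul_zero, add_zero]
  exact sub_nonpos.mpr hle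

end LinearMap.BilinForm

theorem indMul_eq_zero_iff {μ : Measure X} {S : Set X} (hS : MeasurableSet S)
    (g : Lp ℝ 2 μ) : indMul S g = 0 ↔ ∀ᵐ x ∂μ, x ∈ S → g x = 0 := by
  have hind : ⇑((Lp.memLp g).indicator hS).toLp =ᵐ[μ] S.indicator g := MemLp.coeFn_toLp _
  rw [indMul, dif_pos hS, Lp.eq_zero_iff_ae_eq_zero]
  constructor
  · intro h
    filter_upwards [hind, h] with x hgx_ind hzero hx
    have hgx := hgx_ind.symm.trans hzero
    rwa [Set.indicator_of_mem hx] at hgx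
  · intro h
    filter_upwards [hind, h] with x hgx_ind hzero
    by_cases hx : x ∈ S
    · rw [hgx_ind, Set.indicator_of_mem hx, hzero hx, Pi.zero_apply]
    · rw [hgx_ind, Set.indicator_of_notMem hx, Pi.zero_apply]

theorem indMul_sub_abs_eq_zero {μ : Measure X} {S : Set X} (hS : MeasurableSet S)
    {w : Lp ℝ 2 μ} (hw : ∀ᵐ x ∂μ, x ∈ S → 0 ≤ w x) : indMul S (w - |w|) = 0 := by
  rw [indMul_eq_zero_iff hS]
  filter_upwards [hw, Lp.coeFn_sub w |w|, Lp.coeFn_abs w] with x hwx hsub habs hx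
  rw [hsub, Pi.sub_apply, habs, abs_of_nonneg (hwx hx), sub_self]

namespace WideForm

variable {μ : Measure X} (T : WideForm μ)

def toBilinForm : LinearMap.BilinForm ℝ (Lp ℝ 2 μ) :=
  LinearMap.mk₂ ℝ T.Q T.add_left T.smul_left
    (fun u v w => by rw [T.symm, T.add_left, T.symm v, T.symm w u])
    (fun c u v => by rw [T.symm, T.smul_left, T.symm, smul_eq_mul])

def innerQ : LinearMap.BilinForm ℝ (Lp ℝ 2 μ) := T.toBilinForm + innerₗ _

theorem innerQ_apply (u v : Lp ℝ 2 μ) : T.innerQ u v = T.Q u v + ⟪u, v⟫ := rfl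

theorem innerQ_isSymm : T.innerQ.IsSymm :=
  ⟨fun u v => by rw [innerQ_apply, innerQ_apply, T.symm, real_inner_comm]⟩

theorem eq_zero_of_innerQ_self_nonpos {w : Lp ℝ 2 μ} (hw : T.innerQ w w ≤ 0) : w = 0 := by
  rw [innerQ_apply, real_inner_self_eq_norm_sq] at hw
  have hnorm_sq : ‖w‖ ^ 2 = 0 := le_antisymm (by linarith [T.nonneg w]) (sq_nonneg _)
  exact norm_eq_zero.mp (pow_eq_zero_iff two_ne_zero |>.mp hnorm_sq)

theorem innerQ_abs_self_le (hpp : T.PosPres) {u : Lp ℝ 2 μ} (hu : u ∈ T.dom) :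
    T.innerQ |u| |u| ≤ T.innerQ u u := by
  rw [innerQ_apply, innerQ_apply, real_inner_self_eq_norm_sq, real_inner_self_eq_norm_sq,
    norm_abs_eq_norm]
  linarith [(hpp u hu).2]

end WideForm

theorem projection_le_of_nonneg_general {μ : Measure X} (T : WideForm μ) (hpp : T.PosPres)
    (A : Set X) (hA : MeasurableSet A)
    (T' : WideForm μ)
    (hdom : (T'.dom : Set (Lp ℝ 2 μ)) = {u | u ∈ T.dom ∧ indMul Aᶜ u = 0})
    (P : Lp ℝ 2 μ → Lp ℝ 2 μ)
    (hP : ∀ g ∈ T.dom, P g ∈ T'.dom ∧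
      ∀ v ∈ T'.dom, T.Q (g - P g) v + ⟪g - P g, v⟫ = (0 : ℝ)) :
    ∀ f ∈ T.dom, 0 ≤ f → P f ≤ f := by
  intro f hf hf0
  obtain ⟨hPf, horth⟩ := hP f hf
  rw [← SetLike.mem_coe, hdom] at hPf
  set u := f - P f
  have hu : u ∈ T.dom := T.dom.sub_mem hf hPf.1
  have hu_nonneg_off : ∀ᵐ x ∂μ, x ∈ Aᶜ → 0 ≤ u x := by
    filter_upwards [(indMul_eq_zero_iff hA.compl _).1 hPf.2, (Lp.coeFn_nonneg f).2 hf0,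
      Lp.coeFn_sub f (P f)] with x hPx hfx hux hx
    rw [hux, Pi.sub_apply, hPx hx, sub_zero]
    exact hfx
  have hv : u - |u| ∈ T'.dom := by
    rw [← SetLike.mem_coe, hdom]
    exact ⟨T.dom.sub_mem hu (hpp u hu).1, indMul_sub_abs_eq_zero hA.compl hu_nonneg_off⟩
  have hv_nonpos : T.innerQ (u - |u|) (u - |u|) ≤ 0 :=
    T.innerQ_isSymm.apply_sub_sub_nonpos (horth _ hv) (T.innerQ_abs_self_le hpp hu)
  have hu_abs : u = |u| := sub_eq_zero.mp (T.eq_zero_of_innerQ_self_nonpos hv_nonpos)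
  have hu_nonneg : 0 ≤ u := by rw [hu_abs]; exact abs_nonneg u
  exact sub_nonneg.mp hu_nonneg

/-- for a positivity preserving form, the form-orthogonal projection onto
the restricted domain satisfies `P_A f ≤ f` for nonnegative `f ∈ D(Q)`. -/
theorem projection_le_of_nonneg {μ : Measure X} (T : WideForm μ) (hpp : T.PosPres)
    (A : Set X) (hA : MeasurableSet A)
    (T' : WideForm μ)
    (hdom : (T'.dom : Set (Lp ℝ 2 μ)) = {u | u ∈ T.dom ∧ indMul Aᶜ u = 0})
    (hQ : ∀ u v, T'.Q u v = T.Q u v)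
    (P : Lp ℝ 2 μ → Lp ℝ 2 μ)
    (hP : ∀ g ∈ T.dom, P g ∈ T'.dom ∧
      ∀ v ∈ T'.dom, T.Q (g - P g) v + ⟪g - P g, v⟫ = (0 : ℝ)) :
    ∀ f ∈ T.dom, 0 ≤ f → P f ≤ f :=
  projection_le_of_nonneg_general T hpp A hA T' hdom P hP
end
end

section
/- Let Q be a positivity preserving form with compact resolvent, f an eigenfunction with eigenvalue λ, and C₁, ..., C_l the (Q,𝒜)-nodal domains of f (for a nest 𝒜 with f± ∈ D(Q^𝒜_{F±})). Then f·1_{C_i} ∈ D(Q) for each i, f = Σᵢ f·1_{C_i}, and Q(f·1_{C_i}, f·1_{C_j}) ≥ 0 for all i, j. -/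
open MeasureTheory Filter Topology RealInnerProductSpace

noncomputable section

variable {X : Type*} [MeasurableSpace X]

/-- The domain of the restriction of `T` to `B` with respect to the nest `𝒜`:
the form-norm closure of the union of the domains of the restrictions to `B ∩ 𝒜 n`. -/
def NestDom {μ : Measure X} (T : WideForm μ) (𝒜 : ℕ → Set X) (B : Set X) :
    Set (Lp ℝ 2 μ) :=
  {f | f ∈ T.dom ∧ ∃ g : ℕ → Lp ℝ 2 μ,
    (∀ k, g k ∈ T.dom ∧ ∃ n, indMul (B ∩ 𝒜 n) (g k) = g k) ∧
    Tendsto (fun k => T.Q (g k - f) (g k - f) + ‖g k - f‖ ^ 2) atTop (nhds 0)}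

/-- `C` is invariant for the restriction `Q^𝒜_B` (form characterization, valid for
positivity preserving forms). -/
def NestInvariant {μ : Measure X} (T : WideForm μ) (𝒜 : ℕ → Set X) (B C : Set X) : Prop :=
  MeasurableSet C ∧ ∀ f ∈ NestDom T 𝒜 B, indMul C f ∈ NestDom T 𝒜 B ∧
    T.Q f f = T.Q (indMul C f) (indMul C f) + T.Q (f - indMul C f) (f - indMul C f)

/-- `C` is a connected component of the restriction `Q^𝒜_B`: an invariant set of positive
measure whose restriction is irreducible. -/
def NestComponent {μ : Measure X} (T : WideForm μ) (𝒜 : ℕ → Set X) (B C : Set X) : Prop :=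
  NestInvariant T 𝒜 B C ∧ 0 < μ C ∧
    ∀ D : Set X, MeasurableSet D → D ⊆ C →
      (∀ f ∈ NestDom T 𝒜 B, indMul C f = f →
        (indMul D f ∈ NestDom T 𝒜 B ∧
          T.Q f f = T.Q (indMul D f) (indMul D f)
            + T.Q (f - indMul D f) (f - indMul D f))) →
      μ D = 0 ∨ μ (C \ D) = 0

/-!
On a nodal domain `C` of sign `±`, `f·1_C = ±f^±·1_C`, which lies in `D(Q)` because `C` is
invariant for `Q^𝒜_{F±}` and `f^± ∈ D(Q^𝒜_{F±})`; the pieces add up to `f` since the nodal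
domains are almost disjoint and cover `{f ≠ 0}`. Two disjoint invariant sets of the same
restricted form split its quadratic form without cross term, so pieces of equal sign are
`Q`-orthogonal. For pieces of opposite sign, `u = f⁺·1_C` and `v = f⁻·1_D` satisfy
`u ⊓ v = 0`, hence `|u - v| = u + v`, and positivity preservation
`Q(u + v) = Q(|u - v|) ≤ Q(u - v)` gives `Q(u, v) ≤ 0`, i.e. `Q(f·1_C, f·1_D) ≥ 0`.
-/

namespace WideForm

variable {μ : Measure X} (T : WideForm μ)

lemma Q_add_right (u v w : Lp ℝ 2 μ) : T.Q u (v + w) = T.Q u v + T.Q u w := by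
  rw [T.symm, T.add_left, T.symm v, T.symm w]

lemma Q_neg_left (u v : Lp ℝ 2 μ) : T.Q (-u) v = -T.Q u v := by
  simpa using T.smul_left (-1) u v

lemma Q_neg_right (u v : Lp ℝ 2 μ) : T.Q u (-v) = -T.Q u v := by
  rw [T.symm, Q_neg_left, T.symm]

lemma Q_add_add_self (u v : Lp ℝ 2 μ) :
    T.Q (u + v) (u + v) = T.Q u u + 2 * T.Q u v + T.Q v v := by
  rw [T.add_left, Q_add_right, Q_add_right, T.symm v u]
  ring

lemma Q_sub_sub_self (u v : Lp ℝ 2 μ) :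
    T.Q (u - v) (u - v) = T.Q u u - 2 * T.Q u v + T.Q v v := by
  rw [sub_eq_add_neg, Q_add_add_self, Q_neg_right, Q_neg_left, Q_neg_right, neg_neg]
  ring

lemma Q_add_self_add_norm_sq_le (u v : Lp ℝ 2 μ) :
    T.Q (u + v) (u + v) + ‖u + v‖ ^ 2
      ≤ 2 * (T.Q u u + ‖u‖ ^ 2) + 2 * (T.Q v v + ‖v‖ ^ 2) := by
  have hQ := T.Q_sub_sub_self u v
  have hnorm := parallelogram_law_with_norm ℝ u v
  rw [T.Q_add_add_self]
  simp only [sq] at *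
  linarith [T.nonneg (u - v), mul_self_nonneg ‖u - v‖]

lemma PosPres.Q_nonpos_of_inf_eq_zero {T : WideForm μ} (hpp : T.PosPres) {u v : Lp ℝ 2 μ}
    (hu : u ∈ T.dom) (hv : v ∈ T.dom) (huv : u ⊓ v = 0) : T.Q u v ≤ 0 := by
  have habs : |u - v| = u + v := by
    rw [abs_sub_comm, ← sup_sub_inf_eq_abs_sub, ← inf_add_sup, huv, sub_zero, zero_add]
  have hle := (hpp (u - v) (T.dom.sub_mem hu hv)).2
  rw [habs, T.Q_add_add_self, T.Q_sub_sub_self] at hle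
  linarith

end WideForm

section IndMul

variable {μ : Measure X} {A B : Set X} {f g : Lp ℝ 2 μ}

lemma coeFn_indMul (hA : MeasurableSet A) (f : Lp ℝ 2 μ) :
    indMul A f =ᵐ[μ] A.indicator f := by
  classical
  simpa only [indMul, dif_pos hA] using MemLp.coeFn_toLp _

lemma indMul_of_not_measurableSet (hA : ¬MeasurableSet A) (f : Lp ℝ 2 μ) :
    indMul A f = 0 := by
  classical
  simp only [indMul, dif_neg hA]

lemma indMul_congr_ae (h : ∀ᵐ x ∂μ, x ∈ A → f x = g x) : indMul A f = indMul A g := by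
  by_cases hA : MeasurableSet A
  · refine Lp.ext ?_
    filter_upwards [coeFn_indMul hA f, coeFn_indMul hA g, h] with x hf hg hfg
    by_cases hx : x ∈ A <;> simp [hf, hg, hx, hfg]
  · rw [indMul_of_not_measurableSet hA, indMul_of_not_measurableSet hA]

lemma indMul_add (A : Set X) (f g : Lp ℝ 2 μ) :
    indMul A (f + g) = indMul A f + indMul A g := by
  by_cases hA : MeasurableSet A
  · refine Lp.ext ?_
    filter_upwards [coeFn_indMul hA (f + g), coeFn_indMul hA f, coeFn_indMul hA g,
      Lp.coeFn_add f g, Lp.coeFn_add (indMul A f) (indMul A g)] with x h h₁ h₂ hfg hsum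
    rw [h, hsum, Pi.add_apply, h₁, h₂]
    by_cases hx : x ∈ A
    · simp only [Set.indicator_of_mem hx, hfg, Pi.add_apply]
    · simp only [Set.indicator_of_notMem hx, add_zero]
  · simp [indMul_of_not_measurableSet hA]

lemma indMul_zero (A : Set X) : indMul A (0 : Lp ℝ 2 μ) = 0 := by
  simpa using indMul_add A (0 : Lp ℝ 2 μ) 0

lemma indMul_neg (A : Set X) (f : Lp ℝ 2 μ) : indMul A (-f) = -indMul A f :=
  eq_neg_of_add_eq_zero_left (by rw [← indMul_add, neg_add_cancel, indMul_zero])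

lemma indMul_indMul (hA : MeasurableSet A) (hB : MeasurableSet B) (f : Lp ℝ 2 μ) :
    indMul A (indMul B f) = indMul (A ∩ B) f := by
  classical
  refine Lp.ext ?_
  filter_upwards [coeFn_indMul hA (indMul B f), coeFn_indMul hB f,
    coeFn_indMul (hA.inter hB) f] with x hAB hB' hAB'
  rw [hAB, hAB', Set.indicator_apply, hB', Set.indicator_apply, Set.indicator_apply]
  by_cases hxA : x ∈ A <;> by_cases hxB : x ∈ B <;> simp [hxA, hxB]

lemma indMul_of_measure_zero (hA : μ A = 0) (f : Lp ℝ 2 μ) : indMul A f = 0 := by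
  rw [← indMul_zero A]
  refine indMul_congr_ae ?_
  filter_upwards [measure_eq_zero_iff_ae_notMem.mp hA] with x hx hxA using absurd hxA hx

lemma indMul_eq_self_of_subset (hB : MeasurableSet B) (hAB : A ⊆ B) (hf : indMul A f = f) :
    indMul B f = f := by
  by_cases hA : MeasurableSet A
  · rw [← hf, indMul_indMul hB hA, Set.inter_eq_right.mpr hAB]
  · rw [← hf, indMul_of_not_measurableSet hA, indMul_zero]

lemma indMul_nonneg (hf : 0 ≤ f) : 0 ≤ indMul A f := by
  by_cases hA : MeasurableSet A
  · rw [← Lp.coeFn_nonneg]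
    filter_upwards [coeFn_indMul hA f, (Lp.coeFn_nonneg f).mpr hf] with x hx hfx
    rw [hx]
    exact Set.indicator_nonneg (fun _ _ => hfx) x
  · rw [indMul_of_not_measurableSet hA]

lemma indMul_le_self (hf : 0 ≤ f) : indMul A f ≤ f := by
  by_cases hA : MeasurableSet A
  · rw [← Lp.coeFn_le]
    filter_upwards [coeFn_indMul hA f, (Lp.coeFn_nonneg f).mpr hf] with x hx hfx
    rw [hx]
    exact Set.indicator_le_self' (fun _ _ => hfx) x
  · rwa [indMul_of_not_measurableSet hA]

lemma indMul_inf_indMul_eq_zero (hf : 0 ≤ f) (hg : 0 ≤ g) (hfg : f ⊓ g = 0) :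
    indMul A f ⊓ indMul B g = 0 :=
  le_antisymm (hfg ▸ inf_le_inf (indMul_le_self hf) (indMul_le_self hg))
    (le_inf (indMul_nonneg hf) (indMul_nonneg hg))

lemma sum_indMul_eq_self {ι : Type*} [Fintype ι] {C : ι → Set X}
    (hC : ∀ i, MeasurableSet (C i)) (hdisj : ∀ i j, i ≠ j → μ (C i ∩ C j) = 0)
    (hcover : μ ({x | f x ≠ 0} \ ⋃ i, C i) = 0) :
    ∑ i, indMul (C i) f = f := by
  have hdisj_ae : ∀ᵐ x ∂μ, ∀ i j, i ≠ j → x ∉ C i ∩ C j := by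
    refine ae_all_iff.mpr fun i => ae_all_iff.mpr fun j => ?_
    obtain rfl | hij := eq_or_ne i j
    · exact .of_forall fun x hii => absurd rfl hii
    · filter_upwards [measure_eq_zero_iff_ae_notMem.mp (hdisj i j hij)] with x hx _ using hx
  refine Lp.ext ?_
  filter_upwards [Lp.coeFn_fun_finsetSum Finset.univ fun i => indMul (C i) f,
    ae_all_iff.mpr fun i => coeFn_indMul (hC i) f, hdisj_ae,
    measure_eq_zero_iff_ae_notMem.mp hcover] with x hsum hind hdisj_x hcover_x
  rw [hsum, Finset.sum_congr rfl fun i _ => hind i]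
  by_cases hfx : f x = 0
  · rw [hfx]
    exact Finset.sum_eq_zero fun i _ => Set.indicator_apply_eq_zero.mpr fun _ => hfx
  · obtain ⟨i, hxi⟩ := Set.mem_iUnion.mp (not_not.mp fun h => hcover_x ⟨hfx, h⟩)
    rw [Finset.sum_eq_single i (fun j _ hji => Set.indicator_of_notMem
      (fun hxj => hdisj_x j i hji ⟨hxj, hxi⟩) _) (fun h => absurd (Finset.mem_univ i) h)]
    exact Set.indicator_of_mem hxi _

lemma coeFn_posPart (f : Lp ℝ 2 μ) : ⇑f⁺ =ᵐ[μ] fun x => (f x)⁺ := by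
  filter_upwards [Lp.coeFn_sup f 0, Lp.coeFn_zero ℝ 2 μ] with x hsup hzero
  rw [posPart_def, hsup, Pi.sup_apply, hzero, Pi.zero_apply, posPart_def]

lemma coeFn_negPart (f : Lp ℝ 2 μ) : ⇑f⁻ =ᵐ[μ] fun x => (f x)⁻ := by
  filter_upwards [Lp.coeFn_sup (-f) 0, Lp.coeFn_zero ℝ 2 μ, Lp.coeFn_neg f]
    with x hsup hzero hneg
  rw [negPart_def, hsup, Pi.sup_apply, hzero, hneg, Pi.zero_apply, Pi.neg_apply, negPart_def]

lemma indMul_eq_indMul_posPart (h : μ (A \ {x | 0 < f x}) = 0) :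
    indMul A f = indMul A f⁺ := by
  refine indMul_congr_ae ?_
  filter_upwards [ae_le_set.mpr h, coeFn_posPart f] with x hA hpos hx
  rw [hpos, posPart_eq_self.mpr (le_of_lt (hA hx))]

lemma indMul_eq_neg_indMul_negPart (h : μ (A \ {x | f x < 0}) = 0) :
    indMul A f = -indMul A f⁻ := by
  rw [← indMul_neg]
  refine indMul_congr_ae ?_
  filter_upwards [ae_le_set.mpr h, coeFn_negPart f, Lp.coeFn_neg f⁻] with x hA hneg hneg' hx
  rw [hneg', Pi.neg_apply, hneg, negPart_eq_neg.mpr (le_of_lt (hA hx)), neg_neg]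

end IndMul

section NestDom

variable {μ : Measure X} {T : WideForm μ} {𝒜 : ℕ → Set X} {B : Set X}

lemma nestDom_add (hmono : Monotone 𝒜) (hmeas : ∀ n, MeasurableSet (𝒜 n))
    (hB : MeasurableSet B) {u v : Lp ℝ 2 μ} (hu : u ∈ NestDom T 𝒜 B)
    (hv : v ∈ NestDom T 𝒜 B) : u + v ∈ NestDom T 𝒜 B := by
  obtain ⟨hu, g, hg, hgu⟩ := hu
  obtain ⟨hv, h, hh, hhv⟩ := hv
  have hsupp_mono : ∀ {w : Lp ℝ 2 μ} {n m : ℕ}, n ≤ m →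
      indMul (B ∩ 𝒜 n) w = w → indMul (B ∩ 𝒜 m) w = w := fun hnm =>
    indMul_eq_self_of_subset (hB.inter (hmeas _)) (Set.inter_subset_inter_right _ (hmono hnm))
  refine ⟨T.dom.add_mem hu hv, g + h, fun k => ?_, ?_⟩
  · obtain ⟨hgk, n, hn⟩ := hg k
    obtain ⟨hhk, m, hm⟩ := hh k
    refine ⟨T.dom.add_mem hgk hhk, max n m, ?_⟩
    rw [Pi.add_apply, indMul_add, hsupp_mono (le_max_left n m) hn,
      hsupp_mono (le_max_right n m) hm]
  · refine squeeze_zero (fun k => add_nonneg (T.nonneg _) (sq_nonneg _)) (fun k => ?_)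
      (by simpa using (hgu.const_mul 2).add (hhv.const_mul 2))
    rw [Pi.add_apply, add_sub_add_comm]
    exact T.Q_add_self_add_norm_sq_le _ _

lemma NestInvariant.Q_indMul_indMul_eq_zero (hmono : Monotone 𝒜)
    (hmeas : ∀ n, MeasurableSet (𝒜 n)) (hB : MeasurableSet B) {C D : Set X}
    (hC : NestInvariant T 𝒜 B C) (hD : NestInvariant T 𝒜 B D) (hCD : μ (C ∩ D) = 0)
    {u : Lp ℝ 2 μ} (hu : u ∈ NestDom T 𝒜 B) :
    T.Q (indMul C u) (indMul D u) = 0 := by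
  have hsum : indMul C u + indMul D u ∈ NestDom T 𝒜 B :=
    nestDom_add hmono hmeas hB (hC.2 u hu).1 (hD.2 u hu).1
  have hcut : indMul C (indMul C u + indMul D u) = indMul C u := by
    rw [indMul_add, indMul_indMul hC.1 hC.1, Set.inter_self,
      indMul_indMul hC.1 hD.1, indMul_of_measure_zero hCD, add_zero]
  have hsplit := (hC.2 _ hsum).2
  rw [hcut, add_sub_cancel_left, T.Q_add_add_self] at hsplit
  linarith

end NestDom

section NodalDomain

variable {μ : Measure X} {T : WideForm μ} {𝒜 : ℕ → Set X} {f : Lp ℝ 2 μ} {C D : Set X}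

def IsNodalDomain (T : WideForm μ) (𝒜 : ℕ → Set X) (f : Lp ℝ 2 μ) (C : Set X) : Prop :=
  (NestComponent T 𝒜 {x | 0 < f x} C ∧ μ (C \ {x | 0 < f x}) = 0) ∨
    (NestComponent T 𝒜 {x | f x < 0} C ∧ μ (C \ {x | f x < 0}) = 0)

lemma IsNodalDomain.measurableSet (hC : IsNodalDomain T 𝒜 f C) : MeasurableSet C := by
  rcases hC with ⟨hC, -⟩ | ⟨hC, -⟩ <;> exact hC.1.1

lemma IsNodalDomain.indMul_mem_dom (hC : IsNodalDomain T 𝒜 f C)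
    (hfp : f⁺ ∈ NestDom T 𝒜 {x | 0 < f x}) (hfm : f⁻ ∈ NestDom T 𝒜 {x | f x < 0}) :
    indMul C f ∈ T.dom := by
  rcases hC with ⟨hC, hCf⟩ | ⟨hC, hCf⟩
  · rw [indMul_eq_indMul_posPart hCf]
    exact (hC.1.2 _ hfp).1.1
  · rw [indMul_eq_neg_indMul_negPart hCf]
    exact T.dom.neg_mem (hC.1.2 _ hfm).1.1

lemma WideForm.PosPres.Q_indMul_posPart_indMul_negPart_nonpos (hpp : T.PosPres)
    (hC : indMul C f⁺ ∈ T.dom) (hD : indMul D f⁻ ∈ T.dom) :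
    T.Q (indMul C f⁺) (indMul D f⁻) ≤ 0 :=
  hpp.Q_nonpos_of_inf_eq_zero hC hD
    (indMul_inf_indMul_eq_zero (posPart_nonneg f) (negPart_nonneg f)
      (posPart_inf_negPart_eq_zero f))

lemma IsNodalDomain.Q_indMul_nonneg (hpp : T.PosPres) (hmono : Monotone 𝒜)
    (hmeas : ∀ n, MeasurableSet (𝒜 n))
    (hfp : f⁺ ∈ NestDom T 𝒜 {x | 0 < f x}) (hfm : f⁻ ∈ NestDom T 𝒜 {x | f x < 0})
    (hC : IsNodalDomain T 𝒜 f C) (hD : IsNodalDomain T 𝒜 f D) (hCD : μ (C ∩ D) = 0) :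
    0 ≤ T.Q (indMul C f) (indMul D f) := by
  have hf : Measurable f := (Lp.stronglyMeasurable f).measurable
  have hFp : MeasurableSet {x | 0 < f x} := measurableSet_lt measurable_const hf
  have hFm : MeasurableSet {x | f x < 0} := measurableSet_lt hf measurable_const
  rcases hC with ⟨hC, hCf⟩ | ⟨hC, hCf⟩ <;> rcases hD with ⟨hD, hDf⟩ | ⟨hD, hDf⟩
  · rw [indMul_eq_indMul_posPart hCf, indMul_eq_indMul_posPart hDf,
      hC.1.Q_indMul_indMul_eq_zero hmono hmeas hFp hD.1 hCD hfp]
  · rw [indMul_eq_indMul_posPart hCf, indMul_eq_neg_indMul_negPart hDf, T.Q_neg_right,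
      neg_nonneg]
    exact hpp.Q_indMul_posPart_indMul_negPart_nonpos (hC.1.2 _ hfp).1.1 (hD.1.2 _ hfm).1.1
  · rw [indMul_eq_neg_indMul_negPart hCf, indMul_eq_indMul_posPart hDf, T.Q_neg_left,
      T.symm, neg_nonneg]
    exact hpp.Q_indMul_posPart_indMul_negPart_nonpos (hD.1.2 _ hfp).1.1 (hC.1.2 _ hfm).1.1
  · rw [indMul_eq_neg_indMul_negPart hCf, indMul_eq_neg_indMul_negPart hDf, T.Q_neg_left,
      T.Q_neg_right, neg_neg, hC.1.Q_indMul_indMul_eq_zero hmono hmeas hFm hD.1 hCD hfm]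

end NodalDomain

theorem eigenfunction_nodal_decomposition_general {μ : Measure X} (T : WideForm μ)
    (hpp : T.PosPres) (f : Lp ℝ 2 μ)
    (𝒜 : ℕ → Set X) (hmono : Monotone 𝒜) (hmeas : ∀ n, MeasurableSet (𝒜 n))
    (hfp : f ⊔ 0 ∈ NestDom T 𝒜 {x | 0 < (f : X → ℝ) x})
    (hfm : (-f) ⊔ 0 ∈ NestDom T 𝒜 {x | (f : X → ℝ) x < 0})
    (l : ℕ) (C : Fin l → Set X)
    (hC : ∀ i,
      (NestComponent T 𝒜 {x | 0 < (f : X → ℝ) x} (C i) ∧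
        μ (C i \ {x | 0 < (f : X → ℝ) x}) = 0) ∨
      (NestComponent T 𝒜 {x | (f : X → ℝ) x < 0} (C i) ∧
        μ (C i \ {x | (f : X → ℝ) x < 0}) = 0))
    (hdisj : ∀ i j, i ≠ j → μ (C i ∩ C j) = 0)
    (hcover : μ (({x | 0 < (f : X → ℝ) x} ∪ {x | (f : X → ℝ) x < 0}) \ ⋃ i, C i) = 0) :
    (∀ i, indMul (C i) f ∈ T.dom) ∧
      f = ∑ i, indMul (C i) f ∧
      ∀ i j, 0 ≤ T.Q (indMul (C i) f) (indMul (C j) f) := by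
  have hnodal : ∀ i, IsNodalDomain T 𝒜 f (C i) := hC
  have hsupport : {x | 0 < f x} ∪ {x | f x < 0} = {x | f x ≠ 0} :=
    Set.ext fun _ => (lt_or_lt_iff_ne (α := ℝ)).trans ne_comm
  refine ⟨fun i => (hnodal i).indMul_mem_dom hfp hfm,
    (sum_indMul_eq_self (fun i => (hnodal i).measurableSet) hdisj (hsupport ▸ hcover)).symm,
    fun i j => ?_⟩
  obtain rfl | hij := eq_or_ne i j
  · exact T.nonneg _
  · exact (hnodal i).Q_indMul_nonneg hpp hmono hmeas hfp hfm (hnodal j) (hdisj i j hij)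

/-- decomposition of an eigenfunction along its `(Q,𝒜)`-nodal domains:
`f·1_{C_i} ∈ D(Q)`, `f = Σ f·1_{C_i}`, and `Q(f·1_{C_i}, f·1_{C_j}) ≥ 0`. -/
theorem eigenfunction_nodal_decomposition {μ : Measure X} (T : WideForm μ)
    (hpp : T.PosPres) (hdense : Dense (T.dom : Set (Lp ℝ 2 μ)))
    (G : ℝ → Lp ℝ 2 μ →L[ℝ] Lp ℝ 2 μ) (hG : T.IsResolvent G)
    (hcpt : ∀ α > 0, IsCompactOperator (G α))
    (lam : ℝ) (f : Lp ℝ 2 μ) (hf : f ∈ T.dom) (hf0 : f ≠ 0)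
    (heig : ∀ v ∈ T.dom, T.Q f v = lam * ⟪f, v⟫)
    (𝒜 : ℕ → Set X) (hmono : Monotone 𝒜) (hmeas : ∀ n, MeasurableSet (𝒜 n))
    (hfp : f ⊔ 0 ∈ NestDom T 𝒜 {x | 0 < (f : X → ℝ) x})
    (hfm : (-f) ⊔ 0 ∈ NestDom T 𝒜 {x | (f : X → ℝ) x < 0})
    (l : ℕ) (C : Fin l → Set X)
    (hC : ∀ i,
      (NestComponent T 𝒜 {x | 0 < (f : X → ℝ) x} (C i) ∧
        μ (C i \ {x | 0 < (f : X → ℝ) x}) = 0) ∨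
      (NestComponent T 𝒜 {x | (f : X → ℝ) x < 0} (C i) ∧
        μ (C i \ {x | (f : X → ℝ) x < 0}) = 0))
    (hdisj : ∀ i j, i ≠ j → μ (C i ∩ C j) = 0)
    (hcover : μ (({x | 0 < (f : X → ℝ) x} ∪ {x | (f : X → ℝ) x < 0}) \ ⋃ i, C i) = 0) :
    (∀ i, indMul (C i) f ∈ T.dom) ∧
      f = ∑ i, indMul (C i) f ∧
      ∀ i j, 0 ≤ T.Q (indMul (C i) f) (indMul (C j) f) :=
  eigenfunction_nodal_decomposition_general T hpp f 𝒜 hmono hmeas hfp hfm l C hC hdisj hcover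
end
end
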